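/- M_F equals the ℤ[τ]-module generated by (2,0,0)ᵗ, (τ+1, τ, 1)ᵗ, and (0,0,2)ᵗ. -/

import Mathlib

noncomputable def τ : ℝ := (1 + Real.sqrt 5) / 2

/-- The ring `ℤ[τ]`, as a subset of `ℝ`. -/
def Ztau : Set ℝ := {x | ∃ a b : ℤ, x = (a : ℝ) + (b : ℝ) * τ}

/-- `x ≡ y (mod 2)` in `ℤ[τ]`. -/
def ModTwo (x y : ℝ) : Prop := ∃ w ∈ Ztau, x - y = 2 * w

/-- The standard face-centred icosahedral module
`M_F = {(β,γ,δ) : β,γ,δ ∈ ℤ[τ], β ≡ τγ ≡ τ²δ (mod 2)}`. -/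
def MF : Set (Fin 3 → ℝ) :=
  {v | (∀ i, v i ∈ Ztau) ∧ ModTwo (v 0) (τ * v 1) ∧ ModTwo (τ * v 1) (τ ^ 2 * v 2)}

/-!
Writing `v = a (2,0,0) + b (τ+1,τ,1) + c (0,0,2)` means `v₀ = 2a + τ²b`, `v₁ = τb`, `v₂ = b + 2c`.
Hence `v₀ - τv₁ = 2a` and `τv₁ - τ²v₂ = -2τ²c`, which are the two congruences of `M_F`.
Conversely, since `τ` is a unit of `ℤ[τ]` (`τ⁻¹ = τ - 1`), the congruences `v₀ - τv₁ = 2w`,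
`τv₁ - τ²v₂ = 2u` are solved by `a = w`, `b = τ⁻¹v₁`, `c = -τ⁻²u`.
-/

lemma tau_sq : τ ^ 2 = τ + 1 := by
  have h5 : Real.sqrt 5 ^ 2 = 5 := Real.sq_sqrt (by norm_num)
  unfold τ
  linear_combination h5 / 4

namespace Ztau

def subring : Subring ℝ where
  carrier := Ztau
  zero_mem' := ⟨0, 0, by simp⟩
  one_mem' := ⟨1, 0, by simp⟩
  add_mem' := by
    rintro _ _ ⟨a, b, rfl⟩ ⟨c, d, rfl⟩
    exact ⟨a + c, b + d, by push_cast; ring⟩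
  neg_mem' := by
    rintro _ ⟨a, b, rfl⟩
    exact ⟨-a, -b, by push_cast; ring⟩
  mul_mem' := by
    rintro _ _ ⟨a, b, rfl⟩ ⟨c, d, rfl⟩
    refine ⟨a * c + b * d, a * d + b * c + b * d, ?_⟩
    push_cast
    linear_combination (b * d : ℝ) * tau_sq

lemma tau_mem : τ ∈ subring := ⟨0, 1, by simp⟩

end Ztau

lemma eq_combination_iff (t a b c : ℝ) (v : Fin 3 → ℝ) :
    v = a • (![2, 0, 0] : Fin 3 → ℝ) + b • ![t + 1, t, 1] + c • ![0, 0, 2] ↔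
      v 0 = 2 * a + (t + 1) * b ∧ v 1 = t * b ∧ v 2 = b + 2 * c := by
  rw [funext_iff, Fin.forall_fin_succ, Fin.forall_fin_succ, Fin.forall_fin_one]
  simp only [Pi.add_apply, Pi.smul_apply, smul_eq_mul, Matrix.cons_val_zero, Matrix.cons_val_one,
    Matrix.cons_val_two, Matrix.head_cons, Matrix.tail_cons, Fin.succ_zero_eq_one, Fin.succ_one_eq_two]
  constructor <;> rintro ⟨h0, h1, h2⟩ <;> refine ⟨?_, ?_, ?_⟩ <;> linarith

lemma mem_MF_of_eq_combination {v : Fin 3 → ℝ} {a b c : ℝ} (ha : a ∈ Ztau) (hb : b ∈ Ztau)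
    (hc : c ∈ Ztau) (h0 : v 0 = 2 * a + (τ + 1) * b) (h1 : v 1 = τ * b) (h2 : v 2 = b + 2 * c) :
    v ∈ MF := by
  have hτ := Ztau.tau_mem
  have h2mem := ofNat_mem Ztau.subring 2
  refine ⟨fun i => ?_, ⟨a, ha, ?_⟩, ⟨-(τ ^ 2 * c), ?_, ?_⟩⟩
  · fin_cases i
    · show v 0 ∈ Ztau
      rw [h0]
      exact add_mem (mul_mem h2mem ha) (mul_mem (add_mem hτ (one_mem _)) hb)
    · show v 1 ∈ Ztau
      rw [h1]
      exact mul_mem hτ hb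
    · show v 2 ∈ Ztau
      rw [h2]
      exact add_mem hb (mul_mem h2mem hc)
  · linear_combination h0 - τ * h1 - b * tau_sq
  · exact neg_mem (mul_mem (pow_mem hτ 2) hc)
  · linear_combination τ * h1 - τ ^ 2 * h2

lemma exists_combination_of_mem_MF {v : Fin 3 → ℝ} (hv : v ∈ MF) :
    ∃ a ∈ Ztau, ∃ b ∈ Ztau, ∃ c ∈ Ztau,
      v 0 = 2 * a + (τ + 1) * b ∧ v 1 = τ * b ∧ v 2 = b + 2 * c := by
  obtain ⟨hv, ⟨w, hw, h01⟩, ⟨u, hu, h12⟩⟩ := hv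
  -- `τ - 1 = τ⁻¹` and `τ - 2 = -τ⁻²`
  have hb : (τ - 1) * v 1 ∈ Ztau.subring := mul_mem (sub_mem Ztau.tau_mem (one_mem _)) (hv 1)
  have hc : (τ - 2) * u ∈ Ztau.subring := mul_mem (sub_mem Ztau.tau_mem (ofNat_mem _ 2)) hu
  refine ⟨w, hw, _, hb, _, hc, ?_, ?_, ?_⟩
  · linear_combination h01 - v 1 * tau_sq
  · linear_combination -v 1 * tau_sq
  · linear_combination (τ - 2) * h12 + (v 2 * (τ - 1) - v 1) * tau_sq

/-- `M_F` equals the `ℤ[τ]`-module generated by `(2,0,0)`, `(τ+1,τ,1)` and `(0,0,2)`. -/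
theorem MF_eq_span :
    MF = {v | ∃ a ∈ Ztau, ∃ b ∈ Ztau, ∃ c ∈ Ztau,
      v = a • (![2, 0, 0] : Fin 3 → ℝ) + b • ![τ + 1, τ, 1] + c • ![0, 0, 2]} := by
  ext v
  simp only [Set.mem_ofPred_eq, eq_combination_iff]
  constructor
  · exact exists_combination_of_mem_MF
  · rintro ⟨a, ha, b, hb, c, hc, h0, h1, h2⟩
    exact mem_MF_of_eq_combination ha hb hc h0 h1 h2
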